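/- For all natural numbers n ≥ 1 and m ≥ 3, the broadcast domination number of the sunlet graph with degree n, S_m^n, equals n + ⌊m/2⌋. -/

import Mathlib

open SimpleGraph Finset

/-- A dominating broadcast on `G`: every vertex is within distance `f u` of some
vertex `u` with `f u ≥ 1` (distances are measured by the graph metric `G.dist`). -/
def IsDominatingBroadcast {V : Type*} (G : SimpleGraph V) (f : V → ℕ) : Prop :=
  ∀ v : V, ∃ u : V, 1 ≤ f u ∧ G.dist u v ≤ f u

/-- The broadcast domination number of `G`: the minimum cost (sum of strengths)
of a dominating broadcast on `G`. -/
noncomputable def gammaB (V : Type*) [Fintype V] (G : SimpleGraph V) : ℕ :=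
  sInf {c : ℕ | ∃ f : V → ℕ, IsDominatingBroadcast G f ∧ ∑ v, f v = c}

/-- The sunlet graph with degree `n` on the cycle `C_m`, `S_m^n`: a path on `n`
new vertices (a branch) is attached to each vertex of the cycle `C_m`.
The vertex `(i, 0)` is the `i`-th base vertex (on the cycle) and, for
`1 ≤ j ≤ n`, the vertex `(i, j)` is the `j`-th pendant vertex of the branch
attached at `(i, 0)`. -/
def sunletDeg (m n : ℕ) : SimpleGraph (Fin m × Fin (n + 1)) :=
  SimpleGraph.fromRel (fun a b =>
    (a.2 = 0 ∧ b.2 = 0 ∧ (SimpleGraph.cycleGraph m).Adj a.1 b.1) ∨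
    (a.1 = b.1 ∧ (a.2 : ℕ) + 1 = (b.2 : ℕ)))

/-!
Broadcasting with strength `n + ⌊m/2⌋` from one base vertex reaches every vertex: each vertex is
within `n` of its base vertex, and any two base vertices are within `⌊m/2⌋` along the cycle.

For the lower bound, fix a dominating broadcast `f` and ask whether some broadcaster `u` at height
`h` has `f u ≥ h + n`, i.e. arrives at its base vertex with surplus at least `n`.
If so, count leaves: a broadcaster of strength `s` covers at most `2s - 1` leaves, and `u` covers at
most `2(f u - h - n) + 1`, so `2 ∑ f ≥ m + 2n - 1`.
Otherwise, let `a i` be the largest surplus with which a broadcast arrives at base vertex `i` and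
`c i` the total strength on branch `i`. Heights above `a i` on branch `i` can only be covered from
within the branch, and a broadcaster of strength `s` covers at most `2s + 1 ≤ 3s` heights, so
`n ≤ 3 c i + a i`. Where `a` is maximal, the surplus `a p` is attained on branch `p` itself, and
the part of that broadcast's reach lying below the base is wasted; this improves the bound to
`n + 2 a p ≤ 3 c p` and `n + a p + 1 ≤ 3 c p`. Summing over the branches gives
`∑ f ≥ n + ⌊m/2⌋`.
-/

namespace SimpleGraph

variable {V : Type*} {G : SimpleGraph V} {u v : V}

lemma Reachable.exists_adj_dist_add_one_eq (h : G.Reachable u v) (hne : u ≠ v) :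
    ∃ w, G.Adj v w ∧ G.dist u w + 1 = G.dist u v := by
  obtain ⟨p, hp⟩ := h.symm.exists_walk_length_eq_dist
  cases p with
  | nil => exact absurd rfl hne
  | cons hadj p =>
    refine ⟨_, hadj, ?_⟩
    have h₁ := dist_le p
    have h₂ := hadj.reachable.dist_triangle_left u
    have h₃ := dist_eq_one_iff_adj.2 hadj
    rw [Walk.length_cons] at hp
    rw [dist_comm, @dist_comm _ _ u]
    omega

lemma Walk.le_add_length {φ : V → ℕ} (hφ : ∀ ⦃x y⦄, G.Adj x y → φ y ≤ φ x + 1)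
    (w : G.Walk u v) : φ v ≤ φ u + w.length := by
  induction w with
  | nil => simp
  | cons hadj _ ih => have := hφ hadj; rw [Walk.length_cons]; omega

lemma Reachable.le_add_dist {φ : V → ℕ} (hφ : ∀ ⦃x y⦄, G.Adj x y → φ y ≤ φ x + 1)
    (h : G.Reachable u v) : φ v ≤ φ u + G.dist u v := by
  obtain ⟨w, hw⟩ := h.exists_walk_length_eq_dist
  exact hw ▸ w.le_add_length hφ

end SimpleGraph

section Broadcast

variable {V : Type*} {G : SimpleGraph V}

lemma isDominatingBroadcast_single [DecidableEq V] {v₀ : V} {k : ℕ} (hk : 1 ≤ k)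
    (h : ∀ v, G.dist v₀ v ≤ k) : IsDominatingBroadcast G (Pi.single v₀ k) :=
  fun v => ⟨v₀, by simpa using hk, by simpa using h v⟩

lemma gammaB_eq [Fintype V] {k : ℕ} (h₁ : ∃ f, IsDominatingBroadcast G f ∧ ∑ v, f v = k)
    (h₂ : ∀ f, IsDominatingBroadcast G f → k ≤ ∑ v, f v) : gammaB V G = k :=
  le_antisymm (Nat.sInf_le h₁) <| le_csInf ⟨k, h₁⟩ fun _ ⟨f, hf, hk⟩ => hk ▸ h₂ f hf

end Broadcast

section CycleGraph

variable {m : ℕ} [NeZero m]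

lemma cycleGraph_dist_sub_one_le (y : Fin m) : (cycleGraph m).dist (y - 1) y ≤ 1 := by
  rcases eq_or_ne (y - 1) y with h | h
  · simp [h]
  · have hm : m ≠ 1 := by rintro rfl; exact h (Subsingleton.elim _ _)
    refine (dist_eq_one_iff_adj.2 (cycleGraph_adj'.2 (Or.inr ?_))).le
    rw [sub_sub_cancel, Fin.val_one']
    exact Nat.mod_eq_of_lt (by have := NeZero.ne m; omega)

lemma cycleGraph_dist_le_val_sub (x y : Fin m) : (cycleGraph m).dist x y ≤ (y - x).val := by
  induction hk : (y - x).val generalizing y with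
  | zero => simp [sub_eq_zero.1 (Fin.ext hk)]
  | succ k ih =>
    have hne : y - x ≠ 0 := fun h => by simp [h] at hk
    have hk' : (y - 1 - x).val = k := by
      rw [sub_right_comm, Fin.val_sub_one_of_ne_zero hne, hk]; rfl
    calc (cycleGraph m).dist x y
        ≤ (cycleGraph m).dist x (y - 1) + (cycleGraph m).dist (y - 1) y :=
          (cycleGraph_preconnected _ _).dist_triangle_right x
      _ ≤ k + 1 := add_le_add (ih _ hk') (cycleGraph_dist_sub_one_le y)

lemma cycleGraph_dist_le_half (x y : Fin m) : (cycleGraph m).dist x y ≤ m / 2 := by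
  have h₁ := cycleGraph_dist_le_val_sub x y
  have h₂ := cycleGraph_dist_le_val_sub y x
  rw [dist_comm, ← neg_sub, Fin.val_neg] at h₂
  have := (y - x).isLt
  split_ifs at h₂ <;> omega

lemma exists_eq_add_zsmul_of_cycleGraph_walk {x y : Fin m} (w : (cycleGraph m).Walk x y) :
    ∃ k : ℤ, |k| ≤ w.length ∧ y = x + k • (1 : Fin m) := by
  have val_eq_one {a : Fin m} (ha : a.val = 1) : a = 1 := by
    have := a.isLt
    exact Fin.ext (by rw [ha, Fin.val_one', Nat.mod_eq_of_lt (by omega)])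
  induction w with
  | nil => exact ⟨0, by simp⟩
  | @cons x z y hadj w ih =>
    obtain ⟨k, hk, rfl⟩ := ih
    rw [Walk.length_cons]
    rcases cycleGraph_adj'.1 hadj with h | h
    · refine ⟨k - 1, by push_cast; grind, ?_⟩
      rw [sub_zsmul, one_zsmul, ← val_eq_one h]
      abel
    · refine ⟨k + 1, by push_cast; grind, ?_⟩
      rw [add_zsmul, one_zsmul, ← val_eq_one h]
      abel

lemma card_cycleGraph_dist_le (x : Fin m) (s : ℕ) :
    #{y | (cycleGraph m).dist x y ≤ s} ≤ 2 * s + 1 := by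
  have hsub : ({y | (cycleGraph m).dist x y ≤ s} : Finset (Fin m)) ⊆
      (Icc (-(s : ℤ)) s).image fun k => x + k • (1 : Fin m) := by
    intro y hy
    obtain ⟨w, hw⟩ := (cycleGraph_preconnected x y).exists_walk_length_eq_dist
    obtain ⟨k, hk, rfl⟩ := exists_eq_add_zsmul_of_cycleGraph_walk w
    simp only [mem_filter, mem_univ, true_and] at hy
    exact mem_image.2 ⟨k, mem_Icc.2 (abs_le.1 (by omega)), rfl⟩
  calc _ ≤ _ := card_le_card hsub
    _ ≤ #(Icc (-(s : ℤ)) s) := card_image_le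
    _ = 2 * s + 1 := by rw [Int.card_Icc]; omega

end CycleGraph

section Sunlet

variable {m n : ℕ}

lemma sunletDeg_adj_base {i j : Fin m} (h : (cycleGraph m).Adj i j) :
    (sunletDeg m n).Adj (i, 0) (j, 0) :=
  (fromRel_adj _ _ _).2 ⟨fun he => h.ne (congrArg Prod.fst he), .inl (.inl ⟨rfl, rfl, h⟩)⟩

lemma sunletDeg_adj_succ (i : Fin m) (j : Fin n) :
    (sunletDeg m n).Adj (i, j.castSucc) (i, j.succ) :=
  (fromRel_adj _ _ _).2
    ⟨fun he => by simpa using congrArg (fun v => (v.2 : ℕ)) he,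
      .inl (.inr ⟨rfl, by simp⟩)⟩

lemma exists_walk_sunletDeg_base (i : Fin m) (b : Fin (n + 1)) :
    ∃ w : (sunletDeg m n).Walk (i, 0) (i, b), w.length = b := by
  induction b using Fin.induction with
  | zero => exact ⟨.nil, rfl⟩
  | succ j ih =>
    obtain ⟨w, hw⟩ := ih
    exact ⟨w.concat (sunletDeg_adj_succ i j), by simp [hw]⟩

lemma exists_walk_sunletDeg (q : Fin m) (a : Fin (n + 1)) (i : Fin m) (b : Fin (n + 1)) :
    ∃ w : (sunletDeg m n).Walk (q, a) (i, b),
      w.length = (a : ℕ) + (cycleGraph m).dist q i + b := by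
  obtain ⟨w₁, hw₁⟩ := exists_walk_sunletDeg_base (n := n) q a
  obtain ⟨w₂, hw₂⟩ := (cycleGraph_preconnected q i).exists_walk_length_eq_dist
  obtain ⟨w₃, hw₃⟩ := exists_walk_sunletDeg_base (n := n) i b
  let base : cycleGraph m →g sunletDeg m n := ⟨fun i => (i, 0), sunletDeg_adj_base⟩
  exact ⟨(w₁.reverse.append (w₂.map base)).append w₃, by simp [hw₁, hw₂, hw₃]⟩

lemma sunletDeg_connected [NeZero m] : (sunletDeg m n).Connected :=
  (connected_iff _).2
    ⟨fun u v => ⟨(exists_walk_sunletDeg u.1 u.2 v.1 v.2).choose⟩, inferInstance⟩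

lemma dist_sunletDeg_le (u v : Fin m × Fin (n + 1)) :
    (sunletDeg m n).dist u v ≤ (u.2 : ℕ) + (cycleGraph m).dist u.1 v.1 + v.2 := by
  obtain ⟨w, hw⟩ := exists_walk_sunletDeg u.1 u.2 v.1 v.2
  exact hw ▸ dist_le w

lemma le_dist_sunletDeg [NeZero m] (u v : Fin m × Fin (n + 1)) :
    (if u.1 = v.1 then Nat.dist u.2 v.2 else (u.2 : ℕ) + (cycleGraph m).dist u.1 v.1 + v.2) ≤
      (sunletDeg m n).dist u v := by
  set φ : Fin m × Fin (n + 1) → ℕ := fun v =>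
    if u.1 = v.1 then Nat.dist u.2 v.2 else (u.2 : ℕ) + (cycleGraph m).dist u.1 v.1 + v.2
  have φ_base (i : Fin m) : φ (i, 0) = u.2 + (cycleGraph m).dist u.1 i := by
    by_cases h : u.1 = i <;> simp [φ, h, Nat.dist]
  have hstep : ∀ x y : Fin m × Fin (n + 1),
      ((x.2 = 0 ∧ y.2 = 0 ∧ (cycleGraph m).Adj x.1 y.1) ∨ (x.1 = y.1 ∧ (x.2 : ℕ) + 1 = y.2)) →
        φ y ≤ φ x + 1 ∧ φ x ≤ φ y + 1 := by
    rintro ⟨i, a⟩ ⟨j, b⟩ (⟨rfl, rfl, hij⟩ | ⟨rfl, hab⟩)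
    · dsimp only at hij
      have h₁ := hij.reachable.dist_triangle_right u.1
      have h₂ := hij.symm.reachable.dist_triangle_right u.1
      rw [dist_eq_one_iff_adj.2 hij] at h₁
      rw [dist_eq_one_iff_adj.2 hij.symm] at h₂
      rw [φ_base, φ_base]
      omega
    · simp only [φ]; split_ifs <;> simp only [Nat.dist] at * <;> omega
  have hφ : ∀ ⦃x y⦄, (sunletDeg m n).Adj x y → φ y ≤ φ x + 1 := by
    intro x y hxy
    obtain ⟨-, h | h⟩ := (fromRel_adj _ _ _).1 hxy
    exacts [(hstep x y h).1, (hstep y x h).2]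
  simpa [φ, Nat.dist] using (sunletDeg_connected.preconnected u v).le_add_dist hφ

lemma nat_dist_le_dist_sunletDeg [NeZero m] {u v : Fin m × Fin (n + 1)} (h : u.1 = v.1) :
    Nat.dist u.2 v.2 ≤ (sunletDeg m n).dist u v := by
  simpa [h] using le_dist_sunletDeg u v

lemma dist_sunletDeg_of_ne [NeZero m] {u v : Fin m × Fin (n + 1)} (h : u.1 ≠ v.1) :
    (sunletDeg m n).dist u v = (u.2 : ℕ) + (cycleGraph m).dist u.1 v.1 + v.2 :=
  le_antisymm (dist_sunletDeg_le ..) (by simpa [h] using le_dist_sunletDeg u v)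

end Sunlet

namespace sunletDeg

variable {m n : ℕ} {f : Fin m × Fin (n + 1) → ℕ}

lemma isDominatingBroadcast_single [NeZero m] (hn : 1 ≤ n) :
    IsDominatingBroadcast (sunletDeg m n) (Pi.single (0, 0) (n + m / 2)) :=
  _root_.isDominatingBroadcast_single (by omega) fun v => by
    have := cycleGraph_dist_le_half 0 v.1
    have := v.2.is_le
    have := dist_sunletDeg_le (0, 0) v
    simp only [Fin.val_zero, zero_add] at this
    omega

noncomputable def coveredLeaves (f : Fin m × Fin (n + 1) → ℕ) (u : Fin m × Fin (n + 1)) :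
    Finset (Fin m) :=
  {i | (sunletDeg m n).dist u (i, Fin.last n) ≤ f u}

lemma card_coveredLeaves_le_of_le [NeZero m] {u : Fin m × Fin (n + 1)} (h : u.2 + n ≤ f u) :
    #(coveredLeaves f u) ≤ 2 * (f u - u.2 - n) + 1 := by
  refine (card_le_card fun i hi => ?_).trans (card_cycleGraph_dist_le u.1 (f u - u.2 - n))
  simp only [coveredLeaves, mem_filter, mem_univ, true_and] at hi ⊢
  by_cases hi' : u.1 = i
  · simp [hi']
  · rw [dist_sunletDeg_of_ne hi'] at hi
    simp only [Fin.val_last] at hi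
    omega

lemma card_coveredLeaves_lt [NeZero m] (hn : 1 ≤ n) {u : Fin m × Fin (n + 1)} (hu : 1 ≤ f u) :
    #(coveredLeaves f u) < 2 * f u := by
  rcases le_or_gt (u.2 + n) (f u) with h | h
  · have := card_coveredLeaves_le_of_le h
    omega
  · have : coveredLeaves f u ⊆ {u.1} := fun i hi => by
      simp only [coveredLeaves, mem_filter, mem_univ, true_and] at hi
      by_contra hi'
      rw [dist_sunletDeg_of_ne (Ne.symm (by simpa using hi'))] at hi
      simp only [Fin.val_last] at hi
      omega
    have := card_le_card this
    rw [card_singleton] at this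
    omega

lemma le_sum_card_coveredLeaves (hf : IsDominatingBroadcast (sunletDeg m n) f) :
    m ≤ ∑ u ∈ {u | 1 ≤ f u}, #(coveredLeaves f u) :=
  calc m = #(univ : Finset (Fin m)) := by simp
    _ ≤ #(({u | 1 ≤ f u} : Finset _).biUnion (coveredLeaves f)) := card_le_card fun i _ => by
        obtain ⟨u, hu, hd⟩ := hf (i, Fin.last n)
        simp only [mem_biUnion, mem_filter, mem_univ, true_and, coveredLeaves]
        exact ⟨u, hu, hd⟩
    _ ≤ _ := card_biUnion_le

lemma le_sum_of_exists_add_le [NeZero m] (hn : 1 ≤ n)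
    (hf : IsDominatingBroadcast (sunletDeg m n) f) (h : ∃ u, u.2 + n ≤ f u) :
    n + m / 2 ≤ ∑ v, f v := by
  obtain ⟨u₀, hu₀⟩ := h
  set S : Finset (Fin m × Fin (n + 1)) := {u | 1 ≤ f u}
  have hu₀S : u₀ ∈ S := by simp only [S, mem_filter, mem_univ, true_and]; omega
  have hS : ∑ u ∈ S, f u = ∑ v, f v := sum_filter_of_ne fun u _ h => by omega
  have h₀ := card_coveredLeaves_le_of_le hu₀
  have hrest :
      ∑ u ∈ S.erase u₀, #(coveredLeaves f u) ≤ 2 * ∑ u ∈ S.erase u₀, f u := by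
    rw [mul_sum]
    exact sum_le_sum fun u hu =>
      (card_coveredLeaves_lt hn (by simpa [S] using mem_of_mem_erase hu)).le
  have hm := le_sum_card_coveredLeaves hf
  rw [← add_sum_erase S _ hu₀S] at hm
  rw [← hS, ← add_sum_erase S _ hu₀S]
  omega

/-- Truncated subtraction: a broadcast that does not reach `(i, 0)` contributes `0`. -/
noncomputable def baseSurplus (f : Fin m × Fin (n + 1) → ℕ) (i : Fin m) : ℕ :=
  univ.sup fun u => f u - u.2 - (cycleGraph m).dist u.1 i

def branchCost (f : Fin m × Fin (n + 1) → ℕ) (i : Fin m) : ℕ :=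
  ∑ j, f (i, j)

/-- Heights are taken in `ℤ`, so that reach extending below the base vertex is counted too. -/
noncomputable def branchCover (f : Fin m × Fin (n + 1) → ℕ) (i : Fin m) : Finset ℤ :=
  ({j | 1 ≤ f (i, j)} : Finset (Fin (n + 1))).biUnion
    fun j => Icc ((j : ℤ) - f (i, j)) (j + f (i, j))

lemma sum_branchCost : ∑ i, branchCost f i = ∑ v, f v :=
  (Fintype.sum_prod_type _).symm

lemma baseSurplus_lt (h : ∀ u, f u < u.2 + n) (i : Fin m) : baseSurplus f i < n := by
  have := h (i, 0)
  refine (Finset.sup_lt_iff (show 0 < n by simp at this; omega)).2 fun u _ => ?_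
  have := h u
  omega

lemma sub_le_baseSurplus (u : Fin m × Fin (n + 1)) (i : Fin m) :
    f u - u.2 - (cycleGraph m).dist u.1 i ≤ baseSurplus f i :=
  le_sup (f := fun u => f u - u.2 - (cycleGraph m).dist u.1 i) (mem_univ u)

/-- One step from `i` towards `u.1` the surplus of `u` grows by one. -/
lemma exists_lt_baseSurplus {u : Fin m × Fin (n + 1)} {i : Fin m} {x : ℕ} (hne : u.1 ≠ i)
    (h : x + u.2 + (cycleGraph m).dist u.1 i ≤ f u) : ∃ i', x < baseSurplus f i' := by
  obtain ⟨i', -, hi'⟩ := (cycleGraph_preconnected u.1 i).exists_adj_dist_add_one_eq hne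
  exact ⟨i', (by omega : x < f u - u.2 - (cycleGraph m).dist u.1 i').trans_le
    (sub_le_baseSurplus u i')⟩

lemma fst_eq_of_baseSurplus_lt [NeZero m] {u : Fin m × Fin (n + 1)} {i : Fin m}
    {x : Fin (n + 1)} (hx : baseSurplus f i < x) (hu : (sunletDeg m n).dist u (i, x) ≤ f u) :
    u.1 = i := by
  by_contra hne
  rw [dist_sunletDeg_of_ne hne] at hu
  have := sub_le_baseSurplus (f := f) u i
  dsimp only at hu
  omega

lemma fst_eq_of_isMax [NeZero m] {u : Fin m × Fin (n + 1)} {i : Fin m} {x : Fin (n + 1)}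
    (hmax : ∀ i', baseSurplus f i' ≤ baseSurplus f i) (hx : baseSurplus f i ≤ x)
    (hu : (sunletDeg m n).dist u (i, x) ≤ f u) : u.1 = i := by
  by_contra hne
  rw [dist_sunletDeg_of_ne hne] at hu
  obtain ⟨i', hi'⟩ := exists_lt_baseSurplus (f := f) (x := x) hne (by dsimp only at hu; omega)
  have := hmax i'
  omega

lemma exists_baseSurplus_add_le [NeZero m] (hf : IsDominatingBroadcast (sunletDeg m n) f)
    {i : Fin m} (hmax : ∀ i', baseSurplus f i' ≤ baseSurplus f i) :
    ∃ j, 1 ≤ f (i, j) ∧ baseSurplus f i + j ≤ f (i, j) := by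
  rcases eq_or_ne (baseSurplus f i) 0 with h | h
  · obtain ⟨⟨q, j⟩, hu, hd⟩ := hf (i, 0)
    obtain rfl : q = i := fst_eq_of_isMax hmax (by simp [h]) hd
    have := nat_dist_le_dist_sunletDeg (u := (q, j)) (v := (q, 0)) rfl
    simp only [Nat.dist, Fin.val_zero] at this
    exact ⟨j, hu, by omega⟩
  · obtain ⟨u, -, hu⟩ := exists_mem_eq_sup univ univ_nonempty
      fun u => f u - u.2 - (cycleGraph m).dist u.1 i
    by_cases hui : u.1 = i
    · obtain ⟨q, j⟩ := u
      obtain rfl : q = i := hui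
      simp only [baseSurplus, dist_self] at hu h ⊢
      exact ⟨j, by omega, by omega⟩
    · obtain ⟨i', hi'⟩ := exists_lt_baseSurplus (f := f) (x := baseSurplus f i) hui
        (by simp only [baseSurplus] at h ⊢; omega)
      exact absurd (hmax i') (by omega)

lemma coe_mem_branchCover [NeZero m] (hf : IsDominatingBroadcast (sunletDeg m n) f)
    {i : Fin m} {x : Fin (n + 1)}
    (hown : ∀ u, (sunletDeg m n).dist u (i, x) ≤ f u → u.1 = i) :
    (x : ℤ) ∈ branchCover f i := by
  obtain ⟨⟨q, j⟩, hu, hd⟩ := hf (i, x)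
  obtain rfl : q = i := hown _ hd
  have := nat_dist_le_dist_sunletDeg (u := (q, j)) (v := (q, x)) rfl
  simp only [Nat.dist] at this
  simp only [branchCover, mem_biUnion, mem_filter, mem_univ, true_and, mem_Icc]
  exact ⟨j, hu, by omega, by omega⟩

lemma card_branchCover_le_sum (i : Fin m) :
    #(branchCover f i) ≤ ∑ j ∈ {j | 1 ≤ f (i, j)}, (2 * f (i, j) + 1) :=
  card_biUnion_le.trans (sum_le_sum fun j _ => by rw [Int.card_Icc]; omega)

lemma branchCost_eq_sum (i : Fin m) : branchCost f i = ∑ j ∈ {j | 1 ≤ f (i, j)}, f (i, j) :=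
  (sum_filter_of_ne fun j _ h => by omega).symm

lemma card_branchCover_le (i : Fin m) : #(branchCover f i) ≤ 3 * branchCost f i := by
  refine (card_branchCover_le_sum i).trans ?_
  rw [branchCost_eq_sum, mul_sum]
  exact sum_le_sum fun j hj => by simp only [mem_filter] at hj; omega

lemma card_branchCover_add_le {i : Fin m} {w : Fin (n + 1)} (hw : 1 ≤ f (i, w)) :
    #(branchCover f i) + f (i, w) ≤ 3 * branchCost f i + 1 := by
  set B : Finset (Fin (n + 1)) := {j | 1 ≤ f (i, j)}
  have hwB : w ∈ B := by simpa [B] using hw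
  have hcard := card_branchCover_le_sum (f := f) i
  have hrest : ∑ j ∈ B.erase w, (2 * f (i, j) + 1) ≤ 3 * ∑ j ∈ B.erase w, f (i, j) := by
    rw [mul_sum]
    exact sum_le_sum fun j hj => by simp only [B, mem_erase, mem_filter] at hj; omega
  rw [← add_sum_erase _ _ hwB] at hcard
  rw [branchCost_eq_sum, ← add_sum_erase _ _ hwB]
  omega

lemma le_three_mul_branchCost_add_baseSurplus [NeZero m]
    (hf : IsDominatingBroadcast (sunletDeg m n) f) (i : Fin m) :
    n ≤ 3 * branchCost f i + baseSurplus f i := by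
  have hsub : Icc ((baseSurplus f i : ℤ) + 1) n ⊆ branchCover f i := fun x hx => by
    rw [mem_Icc] at hx
    lift x to ℕ using (by omega)
    exact coe_mem_branchCover (x := ⟨x, by omega⟩) hf
      fun u hu => fst_eq_of_baseSurplus_lt (by simp only; omega) hu
  have := (card_le_card hsub).trans (card_branchCover_le i)
  rw [Int.card_Icc] at this
  omega

lemma three_mul_branchCost_ge_of_isMax [NeZero m] (hf : IsDominatingBroadcast (sunletDeg m n) f)
    {i : Fin m} (hmax : ∀ i', baseSurplus f i' ≤ baseSurplus f i) :
    n + baseSurplus f i + 1 ≤ 3 * branchCost f i ∧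
      n + 2 * baseSurplus f i ≤ 3 * branchCost f i := by
  obtain ⟨w, hw₁, hw⟩ := exists_baseSurplus_add_le hf hmax
  have hsub : Icc (-(baseSurplus f i : ℤ)) n ⊆ branchCover f i := fun x hx => by
    rw [mem_Icc] at hx
    by_cases hxK : (baseSurplus f i : ℤ) ≤ x
    · lift x to ℕ using (by omega)
      exact coe_mem_branchCover (x := ⟨x, by omega⟩) hf
        fun u hu => fst_eq_of_isMax hmax (by simp only; omega) hu
    · simp only [branchCover, mem_biUnion, mem_filter, mem_univ, true_and, mem_Icc]
      exact ⟨w, hw₁, by omega, by omega⟩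
  have := card_le_card hsub
  have := card_branchCover_add_le hw₁
  rw [Int.card_Icc] at *
  omega

lemma le_sum_of_branch_bounds (hm : 3 ≤ m) (c a : Fin m → ℕ) (p : Fin m)
    (hp : ∀ i, a i ≤ a p) (ha : ∀ i, a i < n) (h₁ : ∀ i, n ≤ 3 * c i + a i)
    (h₂ : ∀ i, a i = a p → n + a p + 1 ≤ 3 * c i ∧ n + 2 * a p ≤ 3 * c i) :
    n + m / 2 ≤ ∑ i, c i := by
  have hrest : ∀ i ∈ univ.erase p, 1 ≤ c i ∧ n + 1 ≤ 3 * c i + a p := by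
    intro i _
    have := h₁ i
    have := ha i
    rcases (hp i).lt_or_eq with hi | hi
    · omega
    · have := h₂ i hi
      omega
  have hcard : #(univ.erase p) = m - 1 := by simp
  have hp₂ := h₂ p rfl
  rw [← add_sum_erase _ _ (mem_univ p)]
  rcases le_or_gt n (a p + 2) with hK | hK
  · have := card_nsmul_le_sum _ (fun i => c i) 1 fun i hi => (hrest i hi).1
    rw [hcard, smul_eq_mul, mul_one] at this
    omega
  · obtain ⟨t, ht⟩ : ∃ t, n + 1 = a p + t := ⟨n + 1 - a p, by omega⟩
    have := card_nsmul_le_sum _ (fun i => 3 * c i) t fun i hi => by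
      have := (hrest i hi).2
      omega
    rw [hcard, smul_eq_mul, ← mul_sum] at this
    obtain ⟨k, rfl⟩ : ∃ k, m = k + 3 := ⟨m - 3, by omega⟩
    have key : k * 4 ≤ k * t := Nat.mul_le_mul_left _ (by omega)
    rw [show k + 3 - 1 = k + 2 by omega, add_mul] at this
    omega

lemma le_sum_of_forall_lt [NeZero m] (hm : 3 ≤ m) (hf : IsDominatingBroadcast (sunletDeg m n) f)
    (h : ∀ u, f u < u.2 + n) : n + m / 2 ≤ ∑ v, f v := by
  obtain ⟨p, -, hp⟩ := exists_max_image univ (baseSurplus f) univ_nonempty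
  rw [← sum_branchCost]
  refine le_sum_of_branch_bounds hm _ _ p (fun i => hp i (mem_univ i)) (baseSurplus_lt h)
    (le_three_mul_branchCost_add_baseSurplus hf) fun i hi => ?_
  rw [← hi]
  exact three_mul_branchCost_ge_of_isMax hf fun i' => hi ▸ hp i' (mem_univ i')

end sunletDeg

/-- For all natural numbers `n ≥ 1` and `m ≥ 3`, the broadcast domination
number of the sunlet graph with degree `n`, `S_m^n`, equals `n + ⌊m/2⌋`. -/
theorem gammaB_sunletDeg (m n : ℕ) (hm : 3 ≤ m) (hn : 1 ≤ n) :
    gammaB (Fin m × Fin (n + 1)) (sunletDeg m n) = n + m / 2 := by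
  have : NeZero m := ⟨by omega⟩
  refine gammaB_eq ⟨_, sunletDeg.isDominatingBroadcast_single hn, by simp⟩ fun f hf => ?_
  by_cases h : ∃ u : Fin m × Fin (n + 1), u.2 + n ≤ f u
  · exact sunletDeg.le_sum_of_exists_add_le hn hf h
  · push Not at h
    exact sunletDeg.le_sum_of_forall_lt hm hf h
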